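/- Let n ≥ 1 and let f be an isometric equivalence (a distance-preserving bijection) of the Euclidean space ℝⁿ onto itself. If f has finite order, i.e. f^k is the identity for some integer k ≥ 1, then f has a fixed point. -/

import Mathlib

/-!
By the Mazur–Ulam theorem a surjective isometry of a real normed affine space is affine, and an
affine map commutes with barycenters. So if `p` is a periodic point of period `m`, the centroid
of `p, f p, …, f^[m-1] p` is sent to the centroid of `f p, …, f^[m] p = p`, the same point.
-/

open Function Finset

theorem AffineMap.isFixedPt_centroid_of_isPeriodicPt {k V P : Type*} [DivisionRing k]
    [CharZero k] [AddCommGroup V] [Module k V] [AddTorsor V P] (f : P →ᵃ[k] P) {m : ℕ}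
    [NeZero m] {p : P} (hp : IsPeriodicPt f m p) :
    IsFixedPt f (univ.centroid k fun i : Fin m => f^[i] p) := by
  have hshift : (fun i : Fin m => f^[i] p) ∘ Equiv.addRight 1 = f ∘ fun i : Fin m => f^[i] p := by
    funext i
    change f^[(i + 1 : Fin m)] p = f (f^[i] p)
    rw [Fin.val_add, Fin.val_one', Nat.add_mod_mod, hp.iterate_mod_apply, iterate_succ_apply']
  rw [IsFixedPt, centroid_def, map_affineCombination _ _ _
    (sum_centroidWeights_eq_one_of_nonempty k _ univ_nonempty), ← hshift,
    ← (Equiv.addRight (1 : Fin m)).coe_toEmbedding, ← centroid_def, ← centroid_map,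
    map_univ_equiv, centroid_def]

theorem IsometryEquiv.exists_isFixedPt_of_isPeriodicPt {V P : Type*} [NormedAddCommGroup V]
    [NormedSpace ℝ V] [MetricSpace P] [NormedAddTorsor V P] (f : P ≃ᵢ P) {m : ℕ} (hm : 0 < m)
    {p : P} (hp : IsPeriodicPt f m p) : ∃ x, IsFixedPt f x :=
  have : NeZero m := ⟨hm.ne'⟩
  ⟨_, f.toRealAffineIsometryEquiv.toAffineEquiv.toAffineMap.isFixedPt_centroid_of_isPeriodicPt hp⟩

theorem finite_order_isometry_has_fixed_point_general
    (n : ℕ)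
    (f : Equiv.Perm (EuclideanSpace ℝ (Fin n)))
    (hf : ∀ x y : EuclideanSpace ℝ (Fin n), dist (f x) (f y) = dist x y)
    (h : ∃ k : ℕ, 1 ≤ k ∧ f ^ k = 1) :
    ∃ x : EuclideanSpace ℝ (Fin n), f x = x := by
  obtain ⟨k, hk, hfk⟩ := h
  let g : EuclideanSpace ℝ (Fin n) ≃ᵢ EuclideanSpace ℝ (Fin n) := ⟨f, .of_dist_eq hf⟩
  have hperiodic : IsPeriodicPt g k 0 := by
    rw [IsPeriodicPt, IsFixedPt, IsometryEquiv.coe_mk, ← Equiv.Perm.coe_pow, hfk,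
      Equiv.Perm.one_apply]
  exact g.exists_isFixedPt_of_isPeriodicPt hk hperiodic

/-- Every finite-order isometric equivalence (distance-preserving bijection) of the
Euclidean space `ℝⁿ` (`n ≥ 1`) has a fixed point. -/
theorem finite_order_isometry_has_fixed_point
    (n : ℕ) (hn : 1 ≤ n)
    (f : Equiv.Perm (EuclideanSpace ℝ (Fin n)))
    (hf : ∀ x y : EuclideanSpace ℝ (Fin n), dist (f x) (f y) = dist x y)
    (h : ∃ k : ℕ, 1 ≤ k ∧ f ^ k = 1) :
    ∃ x : EuclideanSpace ℝ (Fin n), f x = x :=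
  finite_order_isometry_has_fixed_point_general n f hf h
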